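/- arXiv:2311.09164 — 4 statements merged into one kernel-verified Lean document; each statement's English description precedes it below -/
import Mathlib

section
/- Let A and X be finite nonempty sets, let δ ≥ 0, and let d_in, d_out ≥ 1. Let μ : A × X → ℝ be nonnegative with Σ_{a,x} μ(a,x) = 1, and for each (a,x) let ρ_{a,x} be a positive semidefinite complex d_in × d_in matrix with trace 1. Let Φ be a linear map from d_in × d_in complex matrices to d_out × d_out complex matrices, and let F be the completely mixing channel F(σ) = (tr σ / d_out)·I. Assume that for every (a,x) the trace norm satisfies ‖Φ(ρ_{a,x}) − F(ρ_{a,x})‖₁ ≤ δ. Then for every family of matrices Π(x,a) (x ∈ X, a ∈ A) such that each Π(x,a) is positive semidefinite and Σ_{a∈A} Π(x,a) = I for every x, one has Σ_{a,x} μ(a,x) · Re tr(Π(x,a) · Φ(ρ_{a,x})) ≤ Σ_{x∈X} max_{a∈A} μ(a,x) + δ. -/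
/-!
Split `Φ(ρ) = F(ρ) + (Φ(ρ) - F(ρ))`. Since `F(ρ_{a,x}) = I / d_out`, the first part contributes
`∑ₓ ∑ₐ μ(a,x) tr Π(x,a) / d_out`, for each `x` an average of the `μ(·,x)` with weights
`tr Π(x,a) / d_out` summing to `1`, hence at most `∑ₓ maxₐ μ(a,x)`.
For the second part, `0 ≤ Π ≤ I` gives `Re tr(Π M) ≤ ‖M‖₁`: in an orthonormal eigenbasis `(vᵢ)` of
`M* M` with eigenvalues `λᵢ`, `Re ⟪vᵢ, Π M vᵢ⟫ ≤ ‖Π vᵢ‖ ‖M vᵢ‖ ≤ ‖M vᵢ‖ = √λᵢ`, and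
`‖M‖₁ = ∑ᵢ √λᵢ`.
-/

open ComplexOrder

/-- The trace norm of a complex square matrix: `‖M‖₁ = tr((M*M)^{1/2})`,
taking the real part of the trace of the positive semidefinite square root of `Mᴴ * M`. -/
noncomputable def traceNorm {n : ℕ} (M : Matrix (Fin n) (Fin n) ℂ) : ℝ :=
  ((Matrix.posSemidef_conjTranspose_mul_self M).1.eigenvectorUnitary.1 *
    Matrix.diagonal (((↑) : ℝ → ℂ) ∘ (√·) ∘ (Matrix.posSemidef_conjTranspose_mul_self M).1.eigenvalues) *
    (star (Matrix.posSemidef_conjTranspose_mul_self M).1.eigenvectorUnitary :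
      Matrix (Fin n) (Fin n) ℂ)).trace.re

open Matrix
open scoped InnerProductSpace

section EuclideanLin

variable {𝕜 n ι : Type*} [RCLike 𝕜] [Fintype n] [DecidableEq n] [Fintype ι]

theorem Matrix.trace_toEuclideanLin (A : Matrix n n 𝕜) :
    LinearMap.trace 𝕜 _ (toEuclideanLin A) = A.trace := by
  rw [LinearMap.trace_eq_matrix_trace 𝕜 (EuclideanSpace.basisFun n 𝕜).toBasis]
  congr 1
  ext i j
  simp [LinearMap.toMatrix_apply]

theorem Matrix.trace_eq_sum_inner (A : Matrix n n 𝕜)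
    (b : OrthonormalBasis ι 𝕜 (EuclideanSpace 𝕜 n)) :
    A.trace = ∑ i, ⟪b i, toEuclideanLin A (b i)⟫_𝕜 := by
  rw [← trace_toEuclideanLin, LinearMap.trace_eq_sum_inner _ b]

theorem Matrix.norm_toEuclideanLin_eigenvectorBasis (M : Matrix n n 𝕜)
    (hM : (Mᴴ * M).IsHermitian) (i : n) :
    ‖toEuclideanLin M (hM.eigenvectorBasis i)‖ = √(hM.eigenvalues i) := by
  set v := hM.eigenvectorBasis i
  have : ‖toEuclideanLin M v‖ ^ 2 = hM.eigenvalues i := by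
    rw [← inner_self_eq_norm_sq (𝕜 := 𝕜), ← LinearMap.adjoint_inner_right,
      ← toEuclideanLin_conjTranspose_eq_adjoint]
    have heig : toEuclideanLin (Mᴴ * M) v = (hM.eigenvalues i : 𝕜) • v := by
      apply WithLp.ofLp_injective
      rw [toLpLin_apply, WithLp.ofLp_smul, ← RCLike.real_smul_eq_coe_smul]
      exact hM.mulVec_eigenvectorBasis i
    rw [← LinearMap.comp_apply, ← toLpLin_mul_same, heig, inner_smul_right,
      inner_self_eq_norm_sq_to_K, hM.eigenvectorBasis.orthonormal.1 i]
    simp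
  rw [← this, Real.sqrt_sq (norm_nonneg _)]

end EuclideanLin

open scoped MatrixOrder Matrix.Norms.L2Operator in
theorem Matrix.norm_toEuclideanLin_le_of_posSemidef {n : Type*} [Fintype n] [DecidableEq n]
    {Q : Matrix n n ℂ} (hQ : Q.PosSemidef) (hQ1 : (1 - Q).PosSemidef) (v : EuclideanSpace ℂ n) :
    ‖toEuclideanLin Q v‖ ≤ ‖v‖ := by
  have hnorm : ‖Q‖ ≤ 1 := (CStarAlgebra.norm_le_one_iff_of_nonneg Q hQ.nonneg).2 hQ1
  calc ‖toEuclideanLin Q v‖ ≤ ‖Q‖ * ‖v‖ := Q.l2_opNorm_mulVec v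
    _ ≤ ‖v‖ := mul_le_of_le_one_left (norm_nonneg v) hnorm

open scoped MatrixOrder in
theorem Matrix.posSemidef_one_sub_of_sum_eq_one {𝕜 n ι : Type*} [RCLike 𝕜] [DecidableEq n]
    [Fintype ι] {P : ι → Matrix n n 𝕜} (hP : ∀ i, (P i).PosSemidef) (hsum : ∑ i, P i = 1)
    (i : ι) : (1 - P i).PosSemidef := by
  rw [← hsum]
  exact Finset.single_le_sum (fun j _ => (hP j).nonneg) (Finset.mem_univ i)

theorem Finset.sum_mul_le_sup'_of_sum_eq_one {ι α : Type*} [Semiring α] [LinearOrder α]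
    [IsOrderedRing α] {s : Finset ι} (hs : s.Nonempty) (f w : ι → α) (hw0 : ∀ i ∈ s, 0 ≤ w i)
    (hw1 : ∑ i ∈ s, w i = 1) : ∑ i ∈ s, f i * w i ≤ s.sup' hs f :=
  calc ∑ i ∈ s, f i * w i ≤ ∑ i ∈ s, s.sup' hs f * w i :=
        sum_le_sum fun i hi => mul_le_mul_of_nonneg_right (le_sup' f hi) (hw0 i hi)
    _ = s.sup' hs f := by rw [← mul_sum, hw1, mul_one]

theorem traceNorm_eq_sum_sqrt_eigenvalues {n : ℕ} (M : Matrix (Fin n) (Fin n) ℂ) :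
    traceNorm M = ∑ i, √((posSemidef_conjTranspose_mul_self M).1.eigenvalues i) := by
  rw [traceNorm, trace_mul_cycle, Unitary.coe_star_mul_self, one_mul, trace_diagonal,
    Complex.re_sum]
  rfl

theorem re_trace_mul_le_traceNorm {n : ℕ} {Q : Matrix (Fin n) (Fin n) ℂ} (hQ : Q.PosSemidef)
    (hQ1 : (1 - Q).PosSemidef) (M : Matrix (Fin n) (Fin n) ℂ) :
    (Q * M).trace.re ≤ traceNorm M := by
  set hH := (posSemidef_conjTranspose_mul_self M).1
  set b := hH.eigenvectorBasis
  rw [traceNorm_eq_sum_sqrt_eigenvalues, trace_eq_sum_inner _ b, Complex.re_sum]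
  refine Finset.sum_le_sum fun i _ => ?_
  calc (⟪b i, toEuclideanLin (Q * M) (b i)⟫_ℂ).re
      = (⟪toEuclideanLin Q (b i), toEuclideanLin M (b i)⟫_ℂ).re := by
        rw [toLpLin_mul_same, LinearMap.comp_apply, (isSymmetric_toEuclideanLin_iff.mpr hQ.1)]
    _ ≤ ‖toEuclideanLin Q (b i)‖ * ‖toEuclideanLin M (b i)‖ := re_inner_le_norm (𝕜 := ℂ) _ _
    _ ≤ ‖toEuclideanLin M (b i)‖ := by
        refine mul_le_of_le_one_left (norm_nonneg _) ?_
        simpa [b.orthonormal.1 i] using norm_toEuclideanLin_le_of_posSemidef hQ hQ1 (b i)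
    _ = √(hH.eigenvalues i) := norm_toEuclideanLin_eigenvectorBasis M hH i

theorem sum_mul_re_trace_div_le_sum_sup' {A X : Type*} [Fintype A] [Fintype X] [Nonempty A]
    {d : ℕ} (hd : d ≠ 0) (μ : A × X → ℝ) (Pov : X → A → Matrix (Fin d) (Fin d) ℂ)
    (hPovPsd : ∀ x a, (Pov x a).PosSemidef) (hPovSum : ∀ x, ∑ a : A, Pov x a = 1) :
    ∑ p : A × X, μ p * ((Pov p.2 p.1).trace.re / d)
      ≤ ∑ x : X, Finset.univ.sup' Finset.univ_nonempty fun a => μ (a, x) := by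
  have hweight0 : ∀ x a, 0 ≤ (Pov x a).trace.re / d := fun x a =>
    div_nonneg (Complex.nonneg_iff.mp (hPovPsd x a).trace_nonneg).1 (Nat.cast_nonneg _)
  have hweight1 : ∀ x, ∑ a, (Pov x a).trace.re / d = 1 := fun x => by
    rw [← Finset.sum_div, ← Complex.re_sum, ← trace_sum, hPovSum, trace_one]
    simpa using div_self (Nat.cast_ne_zero.mpr hd : (d : ℝ) ≠ 0)
  rw [Fintype.sum_prod_type_right]
  exact Finset.sum_le_sum fun x _ => Finset.sum_mul_le_sup'_of_sum_eq_one _ _ _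
    (fun a _ => hweight0 x a) (hweight1 x)

theorem guessing_probability_noisy_memory_reduction_general
    {A X : Type*} [Fintype A] [Fintype X] [Nonempty A]
    (δ : ℝ) (d_in d_out : ℕ) (hdout : 1 ≤ d_out)
    (μ : A × X → ℝ) (hμ0 : ∀ p, 0 ≤ μ p) (hμ1 : ∑ p : A × X, μ p = 1)
    (ρ : A × X → Matrix (Fin d_in) (Fin d_in) ℂ)
    (hρtr : ∀ p, (ρ p).trace = 1)
    (Φ : Matrix (Fin d_in) (Fin d_in) ℂ →ₗ[ℂ] Matrix (Fin d_out) (Fin d_out) ℂ)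
    (F : Matrix (Fin d_in) (Fin d_in) ℂ → Matrix (Fin d_out) (Fin d_out) ℂ)
    (hF : ∀ σ, F σ = (σ.trace / (d_out : ℂ)) • (1 : Matrix (Fin d_out) (Fin d_out) ℂ))
    (hΦF : ∀ p : A × X, traceNorm (Φ (ρ p) - F (ρ p)) ≤ δ)
    (Pov : X → A → Matrix (Fin d_out) (Fin d_out) ℂ)
    (hPovPsd : ∀ x a, (Pov x a).PosSemidef)
    (hPovSum : ∀ x, ∑ a : A, Pov x a = 1) :
    ∑ p : A × X, μ p * (Pov p.2 p.1 * Φ (ρ p)).trace.re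
      ≤ (∑ x : X, Finset.univ.sup' Finset.univ_nonempty fun a => μ (a, x)) + δ := by
  have hsplit : ∀ p : A × X, (Pov p.2 p.1 * Φ (ρ p)).trace.re =
      (Pov p.2 p.1).trace.re / d_out + (Pov p.2 p.1 * (Φ (ρ p) - F (ρ p))).trace.re := by
    intro p
    have hmixed : (Pov p.2 p.1 * F (ρ p)).trace.re = (Pov p.2 p.1).trace.re / d_out := by
      rw [hF, hρtr, Matrix.mul_smul, mul_one, trace_smul, smul_eq_mul, one_div, inv_mul_eq_div,
        Complex.div_natCast_re]
    rw [← hmixed, ← Complex.add_re, ← trace_add, ← mul_add, add_sub_cancel]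
  have hnoise : ∀ p : A × X, (Pov p.2 p.1 * (Φ (ρ p) - F (ρ p))).trace.re ≤ δ := fun p =>
    (re_trace_mul_le_traceNorm (hPovPsd p.2 p.1)
      (posSemidef_one_sub_of_sum_eq_one (hPovPsd p.2) (hPovSum p.2) p.1) _).trans (hΦF p)
  calc ∑ p : A × X, μ p * (Pov p.2 p.1 * Φ (ρ p)).trace.re
      = ∑ p : A × X, μ p * ((Pov p.2 p.1).trace.re / d_out)
        + ∑ p : A × X, μ p * (Pov p.2 p.1 * (Φ (ρ p) - F (ρ p))).trace.re := by
        simp only [hsplit, mul_add, Finset.sum_add_distrib]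
    _ ≤ (∑ x : X, Finset.univ.sup' Finset.univ_nonempty fun a => μ (a, x))
        + ∑ p : A × X, μ p * δ :=
        add_le_add (sum_mul_re_trace_div_le_sum_sup' (by omega) μ Pov hPovPsd hPovSum)
          (Finset.sum_le_sum fun p _ => mul_le_mul_of_nonneg_left (hnoise p) (hμ0 p))
    _ = (∑ x : X, Finset.univ.sup' Finset.univ_nonempty fun a => μ (a, x)) + δ := by
        rw [← Finset.sum_mul, hμ1, one_mul]

/-- Reduction of an attacker with a `δ`-noisy quantum memory to one with no quantum memory:
`P_guess(A | X Φ(Q)) ≤ P_guess(A | X) + δ`. -/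
theorem guessing_probability_noisy_memory_reduction
    {A X : Type*} [Fintype A] [Fintype X] [Nonempty A] [Nonempty X]
    (δ : ℝ) (hδ : 0 ≤ δ) (d_in d_out : ℕ) (hdin : 1 ≤ d_in) (hdout : 1 ≤ d_out)
    (μ : A × X → ℝ) (hμ0 : ∀ p, 0 ≤ μ p) (hμ1 : ∑ p : A × X, μ p = 1)
    (ρ : A × X → Matrix (Fin d_in) (Fin d_in) ℂ)
    (hρpsd : ∀ p, (ρ p).PosSemidef) (hρtr : ∀ p, (ρ p).trace = 1)
    (Φ : Matrix (Fin d_in) (Fin d_in) ℂ →ₗ[ℂ] Matrix (Fin d_out) (Fin d_out) ℂ)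
    (F : Matrix (Fin d_in) (Fin d_in) ℂ → Matrix (Fin d_out) (Fin d_out) ℂ)
    (hF : ∀ σ, F σ = (σ.trace / (d_out : ℂ)) • (1 : Matrix (Fin d_out) (Fin d_out) ℂ))
    (hΦF : ∀ p : A × X, traceNorm (Φ (ρ p) - F (ρ p)) ≤ δ)
    (Pov : X → A → Matrix (Fin d_out) (Fin d_out) ℂ)
    (hPovPsd : ∀ x a, (Pov x a).PosSemidef)
    (hPovSum : ∀ x, ∑ a : A, Pov x a = 1) :
    ∑ p : A × X, μ p * (Pov p.2 p.1 * Φ (ρ p)).trace.re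
      ≤ (∑ x : X, Finset.univ.sup' Finset.univ_nonempty fun a => μ (a, x)) + δ :=
  guessing_probability_noisy_memory_reduction_general δ d_in d_out hdout μ hμ0 hμ1 ρ hρtr Φ F hF hΦF
    Pov hPovPsd hPovSum
end

section
/- For every integer z ≥ 2, the real number (⌈log₂ z⌉ : ℝ) + 2·⌈log₃(⌈log₂ z⌉)⌉ + 2 is at most log₂ z + 1.262·log₂(log₂ z) + 6.3, where log₂ and log₃ denote real logarithms in bases 2 and 3 and ⌈·⌉ is the ceiling function. -/
/-!
Write `L = log₂ z ≥ 1`. Then `⌈L⌉ ≤ L + 1 ≤ 2L`, so `⌈log₃ ⌈L⌉⌉ ≤ log₃ 2 + log₃ L + 1`.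
The constant `1.262` exceeds `2 / log₂ 3 ≈ 1.2619` (i.e. `2¹⁰⁰⁰ ≤ 3⁶³¹`), so `2 log₃ x ≤ 1.262 log₂ x`
for `x ≥ 1`; applied to `x = L` and `x = 2` this leaves the constant `1 + 1.262 + 2 + 2 ≤ 6.3`.
-/

open Real

set_option maxRecDepth 10000 in
lemma two_pow_thousand_le_three_pow : (2 : ℕ) ^ 1000 ≤ 3 ^ 631 := by decide

lemma two_mul_log_two_le_mul_log_three : 2 * log 2 ≤ 1.262 * log 3 := by
  have hpow : (2 : ℝ) ^ 1000 ≤ 3 ^ 631 := by exact_mod_cast two_pow_thousand_le_three_pow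
  have h := log_le_log (by positivity) hpow
  rw [log_pow, log_pow] at h
  push_cast at h
  linarith

lemma two_mul_logb_three_le {x : ℝ} (hx : 1 ≤ x) : 2 * logb 3 x ≤ 1.262 * logb 2 x := by
  have hlog2 : 0 < log 2 := log_pos one_lt_two
  have hlog3 : 0 < log 3 := log_pos (by norm_num)
  have hlogx : 0 ≤ log x := log_nonneg hx
  rw [logb, logb, mul_div_assoc', mul_div_assoc', div_le_div_iff₀ hlog3 hlog2]
  nlinarith [mul_le_mul_of_nonneg_left two_mul_log_two_le_mul_log_three hlogx]

lemma ceil_le_two_mul_of_one_le {x : ℝ} (hx : 1 ≤ x) : (⌈x⌉ : ℝ) ≤ 2 * x := by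
  linarith [Int.ceil_lt_add_one x]

lemma ceil_logb_three_ceil_le {x : ℝ} (hx : 1 ≤ x) :
    (⌈logb 3 (⌈x⌉ : ℝ)⌉ : ℝ) ≤ logb 3 2 + logb 3 x + 1 := by
  have hceil : (1 : ℝ) ≤ ⌈x⌉ := by exact_mod_cast Int.one_le_ceil_iff.mpr (by linarith)
  calc (⌈logb 3 (⌈x⌉ : ℝ)⌉ : ℝ) ≤ logb 3 (⌈x⌉ : ℝ) + 1 := (Int.ceil_lt_add_one _).le
    _ ≤ logb 3 (2 * x) + 1 := by
      gcongr
      · norm_num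
      · exact ceil_le_two_mul_of_one_le hx
    _ = logb 3 2 + logb 3 x + 1 := by rw [logb_mul two_ne_zero (by positivity)]

/-- Compression scheme for transmitting an integer `z ≥ 2`:
`⌈log₂ z⌉ + 2⌈log₃(⌈log₂ z⌉)⌉ + 2 ≤ log₂ z + 1.262·log₂(log₂ z) + 6.3`. -/
theorem integer_compression_cost (z : ℤ) (hz : 2 ≤ z) :
    ((⌈Real.logb 2 (z : ℝ)⌉ : ℝ) + 2 * (⌈Real.logb 3 ((⌈Real.logb 2 (z : ℝ)⌉ : ℤ) : ℝ)⌉ : ℝ) + 2)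
      ≤ Real.logb 2 (z : ℝ) + 1.262 * Real.logb 2 (Real.logb 2 (z : ℝ)) + 6.3 := by
  set L := logb 2 (z : ℝ)
  have hL : 1 ≤ L := by
    rw [← logb_self_eq_one one_lt_two]
    exact logb_le_logb_of_le one_lt_two two_pos (by exact_mod_cast hz)
  have hlogb_two : 2 * logb 3 2 ≤ 1.262 := by
    simpa [logb_self_eq_one one_lt_two] using two_mul_logb_three_le one_le_two
  linarith [Int.ceil_lt_add_one L, ceil_logb_three_ceil_le hL, two_mul_logb_three_le hL]
end

section
/- Let n, p, d be natural numbers with p ≥ 1, 2p ≤ n, and d ≤ n, and let M be a set of p pairwise-disjoint 2-element subsets of Fin n. Then the number of d-element subsets S of Fin n such that no element of M is contained in S is at most Σ_{k=0}^{d} C(2p, k) · C(n − 2p, d − k) · exp(−k(k−1)/(4p)), where C(·,·) denotes the binomial coefficient (with C(a,b) = 0 when b > a) and exp is the real exponential. -/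
/-!
A `d`-set avoiding `M` is the union of its trace on the `2p` matched vertices, a `k`-set containing
no edge, and a `(d - k)`-subset of the other `n - 2p` vertices. Edge-free `k`-subsets of the matched
vertices number at most `C(p,k) 2^k`: after adding an edge `{x, y}` to `M`, such a set either misses
it or is an edge-free set of `M` plus `x` or `y`, which is Pascal's recursion for `C(p,k) 2^k`. And
`C(p,k) 2^k ≤ C(2p,k) exp(-k(k-1)/(4p))` because passing from `k` to `k + 1` multiplies
`C(p,k) 2^k / C(2p,k)` by `2(p-k)/(2p-k) ≤ exp(-k/(2p))`, and these exponents sum to `k(k-1)/(4p)`.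
-/

open Finset Real

theorem one_sub_two_mul_le_one_sub_mul_exp_neg {x : ℝ} (hx : x ≤ 1) :
    1 - 2 * x ≤ (1 - x) * exp (-x) :=
  calc 1 - 2 * x ≤ (1 - x) * (1 - x) := by nlinarith [sq_nonneg x]
    _ ≤ (1 - x) * exp (-x) := by
      gcongr
      linarith [add_one_le_exp (-x)]

theorem cast_choose_succ_mul {R : Type*} [CommRing R] {n k : ℕ} (hk : k ≤ n) :
    (n.choose (k + 1) : R) * (k + 1) = n.choose k * (n - k) := by
  have h := congrArg (Nat.cast (R := R)) (Nat.choose_succ_right_eq n k)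
  push_cast [Nat.cast_sub hk] at h
  exact h

theorem choose_mul_two_pow_le (p k : ℕ) :
    (p.choose k : ℝ) * 2 ^ k ≤ (2 * p).choose k * exp (-(k * (k - 1)) / (4 * p)) := by
  induction k with
  | zero => simp
  | succ k ih =>
    rcases lt_or_ge k p with hk | hk
    · have hp : (0 : ℝ) < p := by exact_mod_cast hk.trans_le' (Nat.zero_le k)
      have hkp : (k : ℝ) < p := by exact_mod_cast hk
      have ratio : 2 * ((p : ℝ) - k) ≤ (2 * p - k) * exp (-(k / (2 * p))) := by
        have h := one_sub_two_mul_le_one_sub_mul_exp_neg (x := k / (2 * p))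
          (by rw [div_le_one (by positivity)]; linarith)
        have hx : 2 * p * (k / (2 * p)) = (k : ℝ) := mul_div_cancel₀ _ (by positivity)
        linear_combination 2 * p * h + (2 - exp (-(k / (2 * p)))) * hx
      rw [← mul_le_mul_iff_left₀ (by positivity : (0 : ℝ) < k + 1)]
      push_cast
      calc (p.choose (k + 1) : ℝ) * 2 ^ (k + 1) * (k + 1)
          = (p.choose k * 2 ^ k) * (2 * (p - k)) := by
            rw [mul_right_comm, cast_choose_succ_mul hk.le]; ring
        _ ≤ ((2 * p).choose k * exp (-(k * (k - 1)) / (4 * p))) *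
              ((2 * p - k) * exp (-(k / (2 * p)))) := by gcongr
        _ = (2 * p).choose (k + 1) * exp (-((k + 1) * (k + 1 - 1)) / (4 * p)) * (k + 1) := by
            have := cast_choose_succ_mul (R := ℝ) (n := 2 * p) (k := k) (by omega)
            push_cast at this
            rw [mul_right_comm _ _ ((k : ℝ) + 1), this, mul_mul_mul_comm, ← exp_add]
            congr 2
            field_simp
            ring
    · simp [Nat.choose_eq_zero_of_lt (Nat.lt_succ_of_le hk)]
      positivity

section

variable {α : Type*} [DecidableEq α]

theorem card_filter_powersetCard_inter_le [Fintype α] (T : Finset α) (P : Finset α → Prop)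
    [DecidablePred P] (d : ℕ) :
    #{S ∈ univ.powersetCard d | P (S ∩ T)} ≤
      ∑ k ∈ range (d + 1),
        #{A ∈ T.powersetCard k | P A} * (Fintype.card α - #T).choose (d - k) := by
  set pieces : ℕ → Finset (Finset α) := fun k =>
    ({A ∈ T.powersetCard k | P A} ×ˢ Tᶜ.powersetCard (d - k)).image fun B => B.1 ∪ B.2
  have split_mem :
      {S ∈ (univ : Finset α).powersetCard d | P (S ∩ T)} ⊆
        (range (d + 1)).biUnion pieces := by
    intro S hS
    simp only [mem_filter, mem_powersetCard_univ] at hS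
    have hsplit := card_inter_add_card_sdiff S T
    simp only [pieces, mem_biUnion, mem_range, mem_image, mem_product, mem_filter,
      mem_powersetCard]
    exact ⟨#(S ∩ T), by omega, (S ∩ T, S \ T),
      ⟨⟨⟨inter_subset_right, rfl⟩, hS.2⟩,
        fun x hx => by simp_all, by show #(S \ T) = _; omega⟩, sup_inf_sdiff S T⟩
  refine (card_le_card split_mem).trans (card_biUnion_le.trans (sum_le_sum fun k _ => ?_))
  exact card_image_le.trans_eq (by rw [card_product, card_powersetCard, card_compl])

def edgeFreeSubsets (M : Finset (Finset α)) (k : ℕ) : Finset (Finset α) :=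
  {A ∈ (M.biUnion id).powersetCard k | ∀ e ∈ M, ¬ e ⊆ A}

theorem edgeFreeSubsets_insert_pair_succ_subset (M : Finset (Finset α)) (x y : α) (k : ℕ) :
    edgeFreeSubsets (insert {x, y} M) (k + 1) ⊆ edgeFreeSubsets M (k + 1) ∪
      ((edgeFreeSubsets M k).image (insert x) ∪ (edgeFreeSubsets M k).image (insert y)) := by
  intro A hA
  simp only [edgeFreeSubsets, mem_filter, mem_powersetCard, forall_mem_insert, biUnion_insert, id,
    mem_union, mem_image] at hA ⊢
  obtain ⟨⟨hAV, hAcard⟩, hxyA, hMA⟩ := hA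
  have erase_mem : ∀ z ∈ A, (z = x ∨ z = y) →
      (A.erase z ⊆ M.biUnion id ∧ #(A.erase z) = k) ∧ ∀ f ∈ M, ¬ f ⊆ A.erase z := by
    intro z hz hzxy
    refine ⟨⟨fun w hw => ?_, by rw [card_erase_of_mem hz, hAcard]; rfl⟩,
      fun f hf hfA => hMA f hf (hfA.trans (erase_subset z A))⟩
    rw [mem_erase] at hw
    have := hAV hw.2
    simp only [mem_union, mem_insert, mem_singleton] at this
    refine this.resolve_left fun hwxy => hxyA ?_
    intro t ht
    simp only [mem_insert, mem_singleton] at ht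
    rcases hzxy with rfl | rfl <;> rcases hwxy with rfl | rfl <;> rcases ht with rfl | rfl <;>
      simp_all
  by_cases hx : x ∈ A
  · exact Or.inr (Or.inl ⟨A.erase x, erase_mem x hx (Or.inl rfl), insert_erase hx⟩)
  by_cases hy : y ∈ A
  · exact Or.inr (Or.inr ⟨A.erase y, erase_mem y hy (Or.inr rfl), insert_erase hy⟩)
  refine Or.inl ⟨⟨fun w hw => ?_, hAcard⟩, hMA⟩
  have := hAV hw
  simp only [mem_union, mem_insert, mem_singleton] at this
  rcases this with (rfl | rfl) | h
  exacts [absurd hw hx, absurd hw hy, h]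

theorem card_edgeFreeSubsets_le (M : Finset (Finset α)) (hM : ∀ e ∈ M, #e = 2) (k : ℕ) :
    #(edgeFreeSubsets M k) ≤ (#M).choose k * 2 ^ k := by
  induction M using Finset.induction_on generalizing k with
  | empty =>
    exact (card_filter_le _ _).trans (by simpa using Nat.le_mul_of_pos_right _ (Nat.two_pow_pos k))
  | insert e M heM ih =>
    obtain ⟨x, y, -, rfl⟩ := card_eq_two.mp (hM e (mem_insert_self e M))
    have ih := ih fun f hf => hM f (mem_insert_of_mem hf)
    cases k with
    | zero => exact (card_filter_le _ _).trans (by simp)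
    | succ k =>
      set S := edgeFreeSubsets M
      calc _ ≤ #(S (k + 1) ∪ ((S k).image (insert x) ∪ (S k).image (insert y))) :=
            card_le_card (edgeFreeSubsets_insert_pair_succ_subset M x y k)
        _ ≤ #(S (k + 1)) + (#((S k).image (insert x)) + #((S k).image (insert y))) :=
            (card_union_le _ _).trans (by gcongr; exact card_union_le _ _)
        _ ≤ #(S (k + 1)) + (#(S k) + #(S k)) :=
            Nat.add_le_add_left (Nat.add_le_add card_image_le card_image_le) _
        _ ≤ (#M).choose (k + 1) * 2 ^ (k + 1) +
              ((#M).choose k * 2 ^ k + (#M).choose k * 2 ^ k) := by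
            gcongr <;> exact ih _
        _ = (#(insert {x, y} M)).choose (k + 1) * 2 ^ (k + 1) := by
            rw [card_insert_of_notMem heM, Nat.choose_succ_succ', pow_succ]; ring

end

theorem matching_avoiding_subsets_bound_general (n p d : ℕ) (M : Finset (Finset (Fin n)))
    (hedges : ∀ e ∈ M, e.card = 2)
    (hdisj : ∀ e ∈ M, ∀ f ∈ M, e ≠ f → Disjoint e f)
    (hMcard : M.card = p) :
    ((((Finset.univ : Finset (Fin n)).powersetCard d).filter
        fun S => ∀ e ∈ M, ¬ e ⊆ S).card : ℝ)
      ≤ ∑ k ∈ Finset.range (d + 1),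
          ((2 * p).choose k : ℝ) * ((n - 2 * p).choose (d - k) : ℝ) *
            Real.exp (-((k : ℝ) * ((k : ℝ) - 1)) / (4 * (p : ℝ))) := by
  have card_vertices : #(M.biUnion id) = 2 * p := by
    rw [card_biUnion (t := id) fun e he f hf hne => hdisj e he f hf hne]
    simp only [id, sum_congr rfl hedges, sum_const, hMcard, smul_eq_mul, mul_comm]
  have avoid_iff_trace (S : Finset (Fin n)) :
      (∀ e ∈ M, ¬ e ⊆ S) ↔ ∀ e ∈ M, ¬ e ⊆ S ∩ M.biUnion id :=
    forall₂_congr fun e he => by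
      rw [subset_inter_iff,
        and_iff_left (show e ⊆ M.biUnion id from subset_biUnion_of_mem id he)]
  rw [filter_congr fun S _ => avoid_iff_trace S]
  -- not `rfl`: the statement decides its filter predicate by `Fintype.decidableForallFintype`
  calc _ ≤ ((∑ k ∈ range (d + 1),
            #(edgeFreeSubsets M k) * (n - 2 * p).choose (d - k) : ℕ) : ℝ) := by
        exact_mod_cast (card_filter_powersetCard_inter_le (M.biUnion id)
          (fun A => ∀ e ∈ M, ¬ e ⊆ A) d).trans_eq
          (by rw [Fintype.card_fin, card_vertices]; congr! 3 with k; ext A; simp [edgeFreeSubsets])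
    _ ≤ ∑ k ∈ range (d + 1), (p.choose k : ℝ) * 2 ^ k * (n - 2 * p).choose (d - k) := by
        push_cast
        gcongr with k
        exact_mod_cast hMcard ▸ card_edgeFreeSubsets_le M hedges k
    _ ≤ _ := sum_le_sum fun k _ =>
        (mul_le_mul_of_nonneg_right (choose_mul_two_pow_le p k) (by positivity)).trans_eq
          (mul_right_comm _ _ _)

/-- The number of `d`-element subsets of `Fin n` containing no edge of a matching `M`
of `p` pairwise-disjoint edges is at most
`∑_{k=0}^{d} C(2p,k)·C(n−2p,d−k)·exp(−k(k−1)/(4p))`. -/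
theorem matching_avoiding_subsets_bound (n p d : ℕ) (hp : 1 ≤ p) (h2p : 2 * p ≤ n)
    (hd : d ≤ n) (M : Finset (Finset (Fin n)))
    (hedges : ∀ e ∈ M, e.card = 2)
    (hdisj : ∀ e ∈ M, ∀ f ∈ M, e ≠ f → Disjoint e f)
    (hMcard : M.card = p) :
    ((((Finset.univ : Finset (Fin n)).powersetCard d).filter
        fun S => ∀ e ∈ M, ¬ e ⊆ S).card : ℝ)
      ≤ ∑ k ∈ Finset.range (d + 1),
          ((2 * p).choose k : ℝ) * ((n - 2 * p).choose (d - k) : ℝ) *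
            Real.exp (-((k : ℝ) * ((k : ℝ) - 1)) / (4 * (p : ℝ))) :=
  matching_avoiding_subsets_bound_general n p d M hedges hdisj hMcard
end

section
/- Let p > 0 and q < 0 be real numbers. Then the equation z³ + p·z + q = 0 has exactly one real solution z, and this solution satisfies 0 < z ≤ (−q)^{1/3} + √(p/3), where (·)^{1/3} denotes the real cube root of a nonnegative real number. -/
/-- For `p > 0` and `q < 0` the depressed cubic `z³ + pz + q` has exactly one real
root, and this root satisfies `0 < z ≤ (−q)^{1/3} + √(p/3)`. -/
theorem depressed_cubic_unique_root_bound (p q : ℝ) (hp : 0 < p) (hq : q < 0) :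
    (∃! z : ℝ, z ^ 3 + p * z + q = 0) ∧
    ∀ z : ℝ, z ^ 3 + p * z + q = 0 →
      0 < z ∧ z ≤ (-q) ^ ((1 : ℝ) / 3) + Real.sqrt (p / 3) := by
  set c : ℝ := (-q) ^ ((1 : ℝ) / 3) with hc
  set s : ℝ := Real.sqrt (p / 3) with hs
  set b : ℝ := c + s with hbdef
  have hqpos : (0 : ℝ) < -q := by linarith
  have hcpos : 0 < c := Real.rpow_pos_of_pos hqpos _
  have hsnn : 0 ≤ s := Real.sqrt_nonneg _
  have hc3 : c ^ 3 = -q := by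
    rw [hc, ← Real.rpow_natCast ((-q) ^ ((1:ℝ)/3)) 3, ← Real.rpow_mul hqpos.le]
    norm_num
  have hbpos : 0 < b := by positivity
  -- strict monotonicity of z ↦ z^3 + p z + q
  have hmono : StrictMono (fun z : ℝ => z ^ 3 + p * z + q) := by
    have h1 : StrictMono (fun z : ℝ => z ^ 3) := Odd.strictMono_pow ⟨1, by norm_num⟩
    have h2 : StrictMono (fun z : ℝ => p * z) := fun x y hxy => by
      simpa using (mul_lt_mul_of_pos_left hxy hp)
    exact fun x y hxy => by
      have := add_lt_add (h1 hxy) (h2 hxy)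
      simpa [add_assoc, add_comm, add_left_comm] using add_lt_add_right this q
  have hfb : 0 ≤ b ^ 3 + p * b + q := by
    have hexp : b ^ 3 = c ^ 3 + 3 * c ^ 2 * s + 3 * c * s ^ 2 + s ^ 3 := by ring
    nlinarith [sq_nonneg c, sq_nonneg s, mul_pos hp hbpos]
  have hf0 : (0:ℝ) ^ 3 + p * 0 + q < 0 := by nlinarith
  obtain ⟨z, hz, hfz⟩ := intermediate_value_Icc hbpos.le
      (Continuous.continuousOn (by continuity : Continuous fun z : ℝ => z ^ 3 + p * z + q))
      (Set.mem_Icc.2 ⟨le_of_lt hf0, hfb⟩)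
  have key : ∀ y : ℝ, y ^ 3 + p * y + q = 0 → 0 < y ∧ y ≤ b := by
    intro y hy
    constructor
    · by_contra h
      push_neg at h
      rcases eq_or_lt_of_le h with h | h
      · subst h; nlinarith
      · have := hmono h
        simp only at this
        nlinarith
    · by_contra h
      push_neg at h
      have := hmono h
      simp only at this
      rw [hy] at this
      linarith
  refine ⟨⟨z, hfz, fun y hy => hmono.injective (show y^3+p*y+q = z^3+p*z+q by rw [hy]; exact hfz.symm)⟩, key⟩
end
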